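/- Let λ ∈ (0, 1], p ∈ (0, 1], let ω be holomorphic on the open unit disk D with |ω(z)| ≤ 1 for all z ∈ D, let c ∈ ℂ, and set A(z) = 1 + c·z − λ·z·∫₀ᶻ ω(t) dt (segment integral). If A(z) ≠ 0 for all z with |z| < p, then |c| ≤ (1 + λ·p²)/p. (This is Theorem 3: for a meromorphic f(z) = z + Σ_{n≥2} aₙzⁿ satisfying |z/f(z) − z(z/f(z))' − 1| < λ on D with no pole in {|z| < p}, one has |a₂| ≤ (1 + λp²)/p, since a₂ = −c.) -/

import Mathlib

/-!
Let `F` be the primitive of `ω` on the disk with `F 0 = 0`; then `A z = 1 + c z - λ z F(z)` and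
`‖F z‖ ≤ ‖z‖`. If `‖c‖ > (1 + λ p²) / p`, choose `r < p` with `1 + λ r² < ‖c‖ r`. On the closed
disk of radius `r` the map `z ↦ -(1 - λ z F(z)) / c` sends the disk into itself and has derivative
bounded by `2 λ r / ‖c‖ < 1`, so it is a contraction; its fixed point is a zero of `A` of modulus
`≤ r < p`. This is a quantitative substitute for Rouché's theorem.
-/

open Complex Metric

/-- Contour integral of `ω` along the straight line segment from `z₁` to `z₂`:
`∫_{z₁}^{z₂} ω(t) dt = (z₂ - z₁) ∫₀¹ ω(z₁ + s (z₂ - z₁)) ds`. -/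
noncomputable def segInt (ω : ℂ → ℂ) (z₁ z₂ : ℂ) : ℂ :=
  (z₂ - z₁) * ∫ s in (0:ℝ)..(1:ℝ), ω (z₁ + (s : ℂ) * (z₂ - z₁))

open Set Filter Topology

lemma segInt_eq_sub_of_hasDerivAt {ω F : ℂ → ℂ} {z₁ z₂ : ℂ}
    (hF : ∀ w ∈ segment ℝ z₁ z₂, HasDerivAt F (ω w) w)
    (hω : ContinuousOn ω (segment ℝ z₁ z₂)) :
    segInt ω z₁ z₂ = F z₂ - F z₁ := by
  have hmem : ∀ s ∈ uIcc (0 : ℝ) 1, z₁ + (s : ℂ) * (z₂ - z₁) ∈ segment ℝ z₁ z₂ := by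
    intro s hs
    rw [uIcc_of_le zero_le_one] at hs
    rw [segment_eq_image']
    exact ⟨s, hs, by simp [Complex.real_smul]⟩
  have hderiv : ∀ s ∈ uIcc (0 : ℝ) 1,
      HasDerivAt (fun s : ℝ ↦ F (z₁ + s * (z₂ - z₁))) ((z₂ - z₁) * ω (z₁ + s * (z₂ - z₁))) s := by
    intro s hs
    have hline : HasDerivAt (fun t : ℂ ↦ z₁ + t * (z₂ - z₁)) (z₂ - z₁) s := by
      simpa using ((hasDerivAt_id (s : ℂ)).mul_const (z₂ - z₁)).const_add z₁
    simpa [mul_comm] using ((hF _ (hmem s hs)).comp (s : ℂ) hline).comp_ofReal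
  have hcont : ContinuousOn (fun s : ℝ ↦ (z₂ - z₁) * ω (z₁ + s * (z₂ - z₁))) (uIcc 0 1) :=
    continuousOn_const.mul (hω.comp (by fun_prop) hmem)
  rw [segInt, ← intervalIntegral.integral_const_mul,
    intervalIntegral.integral_eq_sub_of_hasDerivAt hderiv hcont.intervalIntegrable]
  simp

lemma DifferentiableOn.exists_hasDerivAt_segInt_eq {ω : ℂ → ℂ} {z₀ : ℂ} {R : ℝ}
    (hω : DifferentiableOn ℂ ω (ball z₀ R)) :
    ∃ F : ℂ → ℂ, ∀ z ∈ ball z₀ R, HasDerivAt F (ω z) z ∧ segInt ω z₀ z = F z := by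
  obtain ⟨F, hF0, hF⟩ := hω.isExactOn_ball.with_val_at z₀ 0
  refine ⟨F, fun z hz ↦ ⟨hF z hz, ?_⟩⟩
  have hseg := (convex_ball z₀ R).segment_subset (mem_ball_self (pos_of_mem_ball hz)) hz
  rw [segInt_eq_sub_of_hasDerivAt (fun w hw ↦ hF w (hseg hw)) (hω.continuousOn.mono hseg), hF0,
    sub_zero]

lemma exists_mul_add_eq_zero_of_norm_deriv_lt {𝕜 : Type*} [RCLike 𝕜] {c : 𝕜} {φ φ' : 𝕜 → 𝕜}
    {r K : ℝ} (hr : 0 ≤ r) (hφ : ∀ z ∈ closedBall 0 r, HasDerivAt φ (φ' z) z)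
    (hφ' : ∀ z ∈ closedBall 0 r, ‖φ' z‖ ≤ K) (hK : K < ‖c‖)
    (hφr : ∀ z ∈ closedBall 0 r, ‖φ z‖ ≤ ‖c‖ * r) :
    ∃ z ∈ closedBall 0 r, c * z + φ z = 0 := by
  have hK0 : 0 ≤ K := (norm_nonneg _).trans (hφ' 0 (mem_closedBall_self hr))
  have hc : 0 < ‖c‖ := hK0.trans_lt hK
  have hc0 : c ≠ 0 := norm_pos_iff.mp hc
  set ψ : 𝕜 → 𝕜 := fun z ↦ -φ z / c
  have hmaps : MapsTo ψ (closedBall 0 r) (closedBall 0 r) := by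
    intro z hz
    rw [mem_closedBall_zero_iff, norm_div, norm_neg, div_le_iff₀ hc, mul_comm]
    exact hφr z hz
  set L : NNReal := ⟨K / ‖c‖, div_nonneg hK0 hc.le⟩
  have hlip : LipschitzOnWith L ψ (closedBall 0 r) := by
    refine (convex_closedBall 0 r).lipschitzOnWith_of_nnnorm_hasDerivWithin_le
      (f' := fun z ↦ -φ' z / c) (fun z hz ↦ ((hφ z hz).neg.div_const c).hasDerivWithinAt) ?_
    intro z hz
    rw [← NNReal.coe_le_coe, coe_nnnorm, norm_div, norm_neg]
    exact div_le_div_of_nonneg_right (hφ' z hz) hc.le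
  have hL : L < 1 := by
    rw [← NNReal.coe_lt_coe]
    exact (div_lt_one hc).mpr hK
  obtain ⟨y, hy, hfix, -⟩ := ContractingWith.exists_fixedPoint' isClosed_closedBall.isComplete
    hmaps ⟨hL, hlip.mapsToRestrict hmaps⟩ (mem_closedBall_self hr) (edist_ne_top _ _)
  refine ⟨y, hy, ?_⟩
  have : -φ y / c = y := hfix
  rw [div_eq_iff hc0] at this
  linear_combination -this

lemma exists_lt_of_div_lt {a lam p : ℝ} (hp : 0 < p) (h : (1 + lam * p ^ 2) / p < a) :
    ∃ r ∈ Ioo 0 p, 1 + lam * r ^ 2 < a * r := by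
  have hcont : Continuous fun r : ℝ ↦ a * r - (1 + lam * r ^ 2) := by fun_prop
  have hpos : 0 < a * p - (1 + lam * p ^ 2) := by
    rw [div_lt_iff₀ hp] at h; linarith
  have hev : ∀ᶠ r in 𝓝[<] p, r ∈ Ioo 0 p ∧ 0 < a * r - (1 + lam * r ^ 2) :=
    Filter.Eventually.and (Ioo_mem_nhdsLT hp)
      (nhdsWithin_le_nhds (continuousAt_const.eventually_lt hcont.continuousAt hpos))
  obtain ⟨r, hr, hr'⟩ := hev.exists
  exact ⟨r, hr, by linarith⟩

lemma exists_mem_closedBall_one_add_mul_sub_mul_eq_zero {lam r : ℝ} {c : ℂ} {F ω : ℂ → ℂ}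
    (hlam0 : 0 ≤ lam) (hlam1 : lam ≤ 1) (hr1 : r ≤ 1)
    (hF : ∀ z ∈ closedBall 0 r, HasDerivAt F (ω z) z) (hF0 : F 0 = 0)
    (hω : ∀ z ∈ closedBall 0 r, ‖ω z‖ ≤ 1) (hcr : 1 + lam * r ^ 2 < ‖c‖ * r) :
    ∃ z ∈ closedBall 0 r, 1 + c * z - lam * z * F z = 0 := by
  have hr0 : 0 < r := by
    by_contra! h
    nlinarith [norm_nonneg c]
  have hFz : ∀ z ∈ closedBall (0 : ℂ) r, ‖F z‖ ≤ ‖z‖ := by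
    intro z hz
    simpa [hF0] using (convex_closedBall (0 : ℂ) r).norm_image_sub_le_of_norm_hasDerivWithin_le
      (fun w hw ↦ (hF w hw).hasDerivWithinAt) hω (mem_closedBall_self hr0.le) hz
  have hφ : ∀ z ∈ closedBall (0 : ℂ) r,
      HasDerivAt (fun z ↦ 1 - lam * (z * F z)) (-(lam * (F z + z * ω z))) z := by
    intro z hz
    refine ((((hasDerivAt_id' z).mul (hF z hz)).const_mul (lam : ℂ)).const_sub 1).congr_deriv ?_
    ring
  have hφ' : ∀ z ∈ closedBall (0 : ℂ) r, ‖-(lam * (F z + z * ω z))‖ ≤ 2 * lam * r := by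
    intro z hz
    have hzr := mem_closedBall_zero_iff.mp hz
    have hzω : ‖z * ω z‖ ≤ r := by
      rw [norm_mul]
      exact (mul_le_of_le_one_right (norm_nonneg z) (hω z hz)).trans hzr
    calc ‖-(lam * (F z + z * ω z))‖ = lam * ‖F z + z * ω z‖ := by
          rw [norm_neg, norm_mul, norm_real, Real.norm_of_nonneg hlam0]
      _ ≤ lam * (r + r) := by
          gcongr
          exact (norm_add_le _ _).trans (add_le_add ((hFz z hz).trans hzr) hzω)
      _ = 2 * lam * r := by ring
  have hφr : ∀ z ∈ closedBall (0 : ℂ) r, ‖1 - lam * (z * F z)‖ ≤ ‖c‖ * r := by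
    intro z hz
    have hzr := mem_closedBall_zero_iff.mp hz
    calc ‖1 - lam * (z * F z)‖ ≤ 1 + lam * (‖z‖ * ‖F z‖) := by
          refine (norm_sub_le _ _).trans ?_
          rw [norm_one, norm_mul, norm_mul, norm_real, Real.norm_of_nonneg hlam0]
      _ ≤ 1 + lam * (r * r) := by
          gcongr
          exact (hFz z hz).trans hzr
      _ ≤ ‖c‖ * r := by nlinarith
  have hK : 2 * lam * r < ‖c‖ := by nlinarith
  obtain ⟨z, hz, hz0⟩ := exists_mul_add_eq_zero_of_norm_deriv_lt hr0.le hφ hφ' hK hφr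
  exact ⟨z, hz, by linear_combination hz0⟩

/-- **Theorem 3 (coefficient bound).** Let `λ ∈ (0,1]`, `p ∈ (0,1]`, and
`A(z) = 1 + c z - λ z ∫₀ᶻ ω(t) dt` with `ω` holomorphic, `|ω| ≤ 1` on the unit
disk. If `A` has no zero in `{|z| < p}` (i.e. `f = z/A` has no pole there),
then `|c| ≤ (1 + λ p²)/p` (i.e. `|a₂| ≤ (1 + λ p²)/p` since `a₂ = -c`). -/
theorem stmt_9 (lam p : ℝ) (hlam : lam ∈ Set.Ioc (0 : ℝ) 1)
    (hp : p ∈ Set.Ioc (0 : ℝ) 1)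
    (ω : ℂ → ℂ) (c : ℂ)
    (hω : DifferentiableOn ℂ ω (ball (0 : ℂ) 1))
    (hbd : ∀ z ∈ ball (0 : ℂ) 1, ‖ω z‖ ≤ 1)
    (A : ℂ → ℂ)
    (hA : ∀ z ∈ ball (0 : ℂ) 1, A z = 1 + c * z - (lam : ℂ) * z * segInt ω 0 z)
    (hnozero : ∀ z : ℂ, ‖z‖ < p → A z ≠ 0) :
    ‖c‖ ≤ (1 + lam * p ^ 2) / p := by
  by_contra! hc
  obtain ⟨r, ⟨-, hrp⟩, hcr⟩ := exists_lt_of_div_lt hp.1 hc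
  have hball : closedBall (0 : ℂ) r ⊆ ball 0 1 := closedBall_subset_ball (hrp.trans_le hp.2)
  obtain ⟨F, hF⟩ := hω.exists_hasDerivAt_segInt_eq
  have hF0 : F 0 = 0 := by simpa [segInt] using ((hF 0 (mem_ball_self one_pos)).2).symm
  obtain ⟨z, hz, hAz⟩ := exists_mem_closedBall_one_add_mul_sub_mul_eq_zero hlam.1.le hlam.2
    (hrp.le.trans hp.2) (fun z hz ↦ (hF z (hball hz)).1) hF0 (fun z hz ↦ hbd z (hball hz)) hcr
  refine hnozero z ((mem_closedBall_zero_iff.mp hz).trans_lt hrp) ?_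
  rw [hA z (hball hz), (hF z (hball hz)).2, hAz]
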